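/- Let ρ = ∑_{k,j} ρ_{jk} |e_{jk}⟩⟨e_{jk}| ⊗ |f_k⟩⟨f_k| and σ = ∑_{k,j} σ_{jk} |ẽ_{jk}⟩⟨ẽ_{jk}| ⊗ |f_k⟩⟨f_k| be quantum-classical states, where for each k the families {e_{jk}}_j and {ẽ_{jk}}_j are orthonormal bases of H^A ordered so that the eigenvalue sequences (p_{jk})_j and (q_{jk})_j are nonincreasing. Then F(ρ,σ) = ‖√ρ·√σ‖₁ ≤ ∑_{k,j} √(ρ_{jk})·√(σ_{jk}). -/

import Mathlib

open Matrix Kronecker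
open scoped ComplexOrder

/-- The positive semidefinite square root of a positive semidefinite matrix
(the definition `Matrix.PosSemidef.sqrt` of the older Mathlib, removed since). -/
noncomputable def Matrix.PosSemidef.sqrt {n : Type*} [Fintype n] [DecidableEq n]
    {𝕜 : Type*} [RCLike 𝕜] {A : Matrix n n 𝕜} (hA : A.PosSemidef) : Matrix n n 𝕜 :=
  hA.1.eigenvectorUnitary.1 * diagonal ((↑) ∘ (√·) ∘ hA.1.eigenvalues) *
  (star hA.1.eigenvectorUnitary : Matrix n n 𝕜)

/-- The trace norm of a (square complex) matrix: `‖A‖₁ = tr √(Aᴴ A)`. -/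
noncomputable def traceNorm {m : Type*} [Fintype m] [DecidableEq m]
    (A : Matrix m m ℂ) : ℝ :=
  ((Matrix.posSemidef_conjTranspose_mul_self A).sqrt).trace.re

/-!
With `u_{kj} = e_{kj} ⊗ f_k` and `w_{kj} = ẽ_{kj} ⊗ f_k`, both square roots are diagonal in
orthonormal product bases: `√ρ = ∑ c_x |u_x⟩⟨u_x|` and `√σ = ∑ d_y |w_y⟩⟨w_y|`. For
`M = √ρ √σ` there is a contraction `W` with `W M = √(MᴴM)`, so
`‖M‖₁ = Re tr (W M) = Re ∑ c_x d_y ⟪u_x, w_y⟫ ⟪w_y, W u_x⟫`. By Bessel's inequality both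
`|⟪u_x, w_y⟫|²` and `|⟪w_y, W u_x⟫|²` are doubly substochastic, and the first vanishes between
different blocks `k`. After AM–GM it remains to see `∑ a_i b_j S_ij ≤ ∑ a_i b_i` for sorted
nonnegative `a, b` and doubly substochastic `S`: two Abel summations reduce this to the fact that
the corner `[0, t] × [0, s]` of `S` has mass at most `min t s + 1`.
-/

open Finset
open scoped InnerProductSpace

theorem Fintype.sum_comp_le_sum_of_injective {ι κ M : Type*} [Fintype ι] [Fintype κ]
    [AddCommMonoid M] [PartialOrder M] [IsOrderedAddMonoid M] {g : ι → κ} (hg : g.Injective)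
    {f : κ → M} (hf : 0 ≤ f) : ∑ i, f (g i) ≤ ∑ k, f k :=
  (sum_map univ ⟨g, hg⟩ f).symm.trans_le (sum_le_univ_sum_of_nonneg hf)

theorem Fintype.sum_sum_prod_eq_sum_sum_sum_of_ne {κ ι ι' M : Type*} [Fintype κ] [DecidableEq κ]
    [Fintype ι] [Fintype ι'] [AddCommMonoid M] (F : κ × ι → κ × ι' → M)
    (hF : ∀ k l i j, k ≠ l → F (k, i) (l, j) = 0) :
    ∑ x, ∑ y, F x y = ∑ k, ∑ i, ∑ j, F (k, i) (k, j) := by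
  simp only [Fintype.sum_prod_type]
  refine Finset.sum_congr rfl fun k _ => Finset.sum_congr rfl fun i _ => ?_
  exact Finset.sum_eq_single k
    (fun l _ hlk => Finset.sum_eq_zero fun j _ => hF k l i j hlk.symm) (by simp)

theorem Fin.sum_mul_le_sum_mul_of_sum_Iic_le {R : Type*} [CommRing R] [PartialOrder R]
    [IsOrderedRing R] {n : ℕ} {a x y : Fin n → R} (ha₀ : 0 ≤ a) (ha : Antitone a)
    (hxy : ∀ t, ∑ i ∈ Iic t, x i ≤ ∑ i ∈ Iic t, y i) :
    ∑ i, a i * x i ≤ ∑ i, a i * y i := by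
  induction n with
  | zero => simp
  | succ n ih =>
    set a' : Fin n → R := fun i => a i.castSucc - a (Fin.last n)
    have hsplit : ∀ z : Fin (n + 1) → R,
        ∑ i, a i * z i = ∑ i : Fin n, a' i * z i.castSucc + a (Fin.last n) * ∑ i, z i := by
      intro z
      simp only [a', sub_mul, sum_sub_distrib, Fin.sum_univ_castSucc (n := n)]
      rw [← mul_sum]
      ring
    rw [hsplit, hsplit]
    gcongr ?_ + ?_
    · exact ih (fun i => sub_nonneg.2 (ha (Fin.le_last _)))
        (fun i j hij => sub_le_sub_right (ha (Fin.castSucc_le_castSucc_iff.2 hij)) _)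
        (fun t => by simpa [← Fin.map_castSuccEmb_Iic] using hxy t.castSucc)
    · exact mul_le_mul_of_nonneg_left (by simpa using hxy ⊤) (ha₀ _)

namespace Matrix

section DoublySubstochastic

variable {R : Type*} [CommRing R] [PartialOrder R] [IsOrderedRing R]
  {m n : Type*} [Fintype m] [Fintype n]

structure IsDoublySubstochastic (S : Matrix m n R) : Prop where
  nonneg : ∀ i j, 0 ≤ S i j
  row_sum_le_one : ∀ i, ∑ j, S i j ≤ 1
  col_sum_le_one : ∀ j, ∑ i, S i j ≤ 1

namespace IsDoublySubstochastic

variable {S : Matrix m n R}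

theorem submatrix (hS : S.IsDoublySubstochastic) {m' n' : Type*} [Fintype m'] [Fintype n']
    {f : m' → m} {g : n' → n} (hf : f.Injective) (hg : g.Injective) :
    (S.submatrix f g).IsDoublySubstochastic where
  nonneg i j := hS.nonneg (f i) (g j)
  row_sum_le_one i := (Fintype.sum_comp_le_sum_of_injective hg (hS.nonneg (f i))).trans
    (hS.row_sum_le_one (f i))
  col_sum_le_one j := (Fintype.sum_comp_le_sum_of_injective hf (hS.nonneg · (g j))).trans
    (hS.col_sum_le_one (g j))

theorem sum_sum_le_card_left (hS : S.IsDoublySubstochastic) (I : Finset m) (J : Finset n) :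
    ∑ i ∈ I, ∑ j ∈ J, S i j ≤ #I := by
  rw [card_eq_sum_ones, Nat.cast_sum, Nat.cast_one]
  exact sum_le_sum fun i _ =>
    (sum_le_univ_sum_of_nonneg (hS.nonneg i)).trans (hS.row_sum_le_one i)

theorem sum_sum_le_card_right (hS : S.IsDoublySubstochastic) (I : Finset m) (J : Finset n) :
    ∑ i ∈ I, ∑ j ∈ J, S i j ≤ #J := by
  calc ∑ i ∈ I, ∑ j ∈ J, S i j = ∑ j ∈ J, ∑ i ∈ I, S i j := sum_comm
    _ ≤ ∑ _j ∈ J, 1 := sum_le_sum fun j _ =>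
        (sum_le_univ_sum_of_nonneg (hS.nonneg · j)).trans (hS.col_sum_le_one j)
    _ = #J := by simp

theorem sum_sum_mul_mul_le {k : ℕ} {S : Matrix (Fin k) (Fin k) R} (hS : S.IsDoublySubstochastic)
    {a b : Fin k → R} (ha₀ : 0 ≤ a) (hb₀ : 0 ≤ b) (ha : Antitone a) (hb : Antitone b) :
    ∑ i, ∑ j, a i * b j * S i j ≤ ∑ i, a i * b i := by
  have hrect : ∀ s t : Fin k, ∑ j ∈ Iic s, ∑ i ∈ Iic t, S i j
      ≤ ∑ j ∈ Iic s, if j ≤ t then (1 : R) else 0 := by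
    intro s t
    rw [← sum_filter, sum_comm]
    rcases le_total s t with hst | hts
    · rw [filter_true_of_mem fun j hj => (mem_Iic.1 hj).trans hst]
      simpa using hS.sum_sum_le_card_right (Iic t) (Iic s)
    · have : {j ∈ Iic s | j ≤ t} = Iic t := by ext j; simpa using fun h => h.trans hts
      rw [this]
      simpa using hS.sum_sum_le_card_left (Iic t) (Iic s)
  have hrow : ∀ t : Fin k, ∑ i ∈ Iic t, ∑ j, b j * S i j ≤ ∑ i ∈ Iic t, b i := by
    intro t
    calc ∑ i ∈ Iic t, ∑ j, b j * S i j = ∑ j, b j * ∑ i ∈ Iic t, S i j := by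
          simp only [mul_sum]; exact sum_comm
      _ ≤ ∑ j, b j * if j ≤ t then 1 else 0 :=
          Fin.sum_mul_le_sum_mul_of_sum_Iic_le hb₀ hb (hrect · t)
      _ = ∑ i ∈ Iic t, b i := by simp [← sum_filter, filter_ge_eq_Iic]
  calc ∑ i, ∑ j, a i * b j * S i j = ∑ i, a i * ∑ j, b j * S i j := by
        simp only [mul_sum, mul_assoc]
    _ ≤ ∑ i, a i * b i := Fin.sum_mul_le_sum_mul_of_sum_Iic_le ha₀ ha hrow

end IsDoublySubstochastic

end DoublySubstochastic

theorem sum_sum_mul_norm_mul_norm_le {k : ℕ} {a b : Fin k → ℝ} (ha₀ : 0 ≤ a) (hb₀ : 0 ≤ b)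
    (ha : Antitone a) (hb : Antitone b) {A B : Matrix (Fin k) (Fin k) ℂ}
    (hA : (of fun i j => ‖A i j‖ ^ 2).IsDoublySubstochastic)
    (hB : (of fun i j => ‖B i j‖ ^ 2).IsDoublySubstochastic) :
    ∑ i, ∑ j, a i * b j * (‖A i j‖ * ‖B i j‖) ≤ ∑ i, a i * b i := by
  have hamgm : ∀ i j, a i * b j * (‖A i j‖ * ‖B i j‖)
      ≤ (a i * b j * ‖A i j‖ ^ 2 + a i * b j * ‖B i j‖ ^ 2) / 2 := fun i j => by
    nlinarith [mul_nonneg (mul_nonneg (ha₀ i) (hb₀ j)) (sq_nonneg (‖A i j‖ - ‖B i j‖))]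
  calc ∑ i, ∑ j, a i * b j * (‖A i j‖ * ‖B i j‖)
      ≤ ∑ i, ∑ j, (a i * b j * ‖A i j‖ ^ 2 + a i * b j * ‖B i j‖ ^ 2) / 2 :=
        sum_le_sum fun i _ => sum_le_sum fun j _ => hamgm i j
    _ = ((∑ i, ∑ j, a i * b j * ‖A i j‖ ^ 2) + ∑ i, ∑ j, a i * b j * ‖B i j‖ ^ 2) / 2 := by
        simp only [← sum_div, ← sum_add_distrib]
    _ ≤ ((∑ i, a i * b i) + ∑ i, a i * b i) / 2 := by
        gcongr (?_ + ?_) / 2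
        · exact hA.sum_sum_mul_mul_le ha₀ hb₀ ha hb
        · exact hB.sum_sum_mul_mul_le ha₀ hb₀ ha hb
    _ = ∑ i, a i * b i := by ring

end Matrix

theorem Orthonormal.isDoublySubstochastic_norm_inner_sq {𝕜 E F ι κ : Type*} [RCLike 𝕜]
    [NormedAddCommGroup E] [InnerProductSpace 𝕜 E] [CompleteSpace E]
    [NormedAddCommGroup F] [InnerProductSpace 𝕜 F] [CompleteSpace F] [Fintype ι] [Fintype κ]
    {u : ι → E} {w : κ → F} (hu : Orthonormal 𝕜 u) (hw : Orthonormal 𝕜 w) {T : E →L[𝕜] F}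
    (hT : ‖T‖ ≤ 1) :
    (Matrix.of fun x y => ‖⟪w y, T (u x)⟫_𝕜‖ ^ 2).IsDoublySubstochastic where
  nonneg _ _ := sq_nonneg _
  row_sum_le_one x := by
    have hTu : ‖T (u x)‖ ≤ 1 := (T.le_opNorm _).trans (by simpa [hu.1 x] using hT)
    calc ∑ y, ‖⟪w y, T (u x)⟫_𝕜‖ ^ 2 ≤ ‖T (u x)‖ ^ 2 := hw.sum_inner_products_le _
      _ ≤ 1 := pow_le_one₀ (norm_nonneg _) hTu
  col_sum_le_one y := by
    set T' := ContinuousLinearMap.adjoint T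
    have hTw : ‖T' (w y)‖ ≤ 1 :=
      (T'.le_opNorm _).trans (by simpa [T', hw.1 y] using hT)
    calc ∑ x, ‖⟪w y, T (u x)⟫_𝕜‖ ^ 2 = ∑ x, ‖⟪u x, T' (w y)⟫_𝕜‖ ^ 2 := by
          refine sum_congr rfl fun x _ => ?_
          rw [← ContinuousLinearMap.adjoint_inner_left, norm_inner_symm]
      _ ≤ ‖T' (w y)‖ ^ 2 := hu.sum_inner_products_le _
      _ ≤ 1 := pow_le_one₀ (norm_nonneg _) hTw

theorem EuclideanSpace.orthonormal_toLp_iff {𝕜 ι n : Type*} [RCLike 𝕜] [DecidableEq ι]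
    [Fintype n] {u : ι → n → 𝕜} :
    Orthonormal 𝕜 (fun i => WithLp.toLp 2 (u i)) ↔
      ∀ i j, star (u i) ⬝ᵥ u j = if i = j then 1 else 0 := by
  simp [orthonormal_iff_ite, EuclideanSpace.inner_toLp_toLp, dotProduct_comm]

def kroneckerVec {R m n : Type*} [Mul R] (a : m → R) (b : n → R) : m × n → R :=
  fun z => a z.1 * b z.2

theorem star_kroneckerVec_dotProduct_kroneckerVec {R m n : Type*} [CommSemiring R] [StarRing R]
    [Fintype m] [Fintype n] (a c : m → R) (b d : n → R) :
    star (kroneckerVec a b) ⬝ᵥ kroneckerVec c d = (star a ⬝ᵥ c) * (star b ⬝ᵥ d) := by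
  simp only [dotProduct, kroneckerVec, Pi.star_apply, star_mul', Fintype.sum_prod_type,
    sum_mul_sum]
  exact sum_congr rfl fun i _ => sum_congr rfl fun j _ => by ring

theorem star_kroneckerVec_dotProduct_kroneckerVec_eq_ite {R κ ι m n : Type*} [CommSemiring R]
    [StarRing R] [Fintype m] [Fintype n] [DecidableEq κ] [DecidableEq ι]
    {g : κ → ι → m → R} {f : κ → n → R}
    (hg : ∀ k i j, star (g k i) ⬝ᵥ g k j = if i = j then 1 else 0)
    (hf : ∀ k l, star (f k) ⬝ᵥ f l = if k = l then 1 else 0) (x y : κ × ι) :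
    star (kroneckerVec (g x.1 x.2) (f x.1)) ⬝ᵥ kroneckerVec (g y.1 y.2) (f y.1) =
      if x = y then 1 else 0 := by
  obtain ⟨k, i⟩ := x
  obtain ⟨l, j⟩ := y
  rw [star_kroneckerVec_dotProduct_kroneckerVec, hf]
  by_cases hkl : k = l
  · subst hkl
    simp [hg, Prod.ext_iff]
  · simp [hkl]

theorem vecMulVec_kronecker_vecMulVec {R m n : Type*} [CommSemiring R] [StarRing R]
    (a : m → R) (b : n → R) :
    vecMulVec a (star a) ⊗ₖ vecMulVec b (star b) =
      vecMulVec (kroneckerVec a b) (star (kroneckerVec a b)) := by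
  ext x y
  simp only [kroneckerMap_apply, vecMulVec_apply, kroneckerVec, Pi.star_apply, star_mul']
  ring

namespace Matrix

variable {ι n : Type*} [Fintype ι] [Fintype n]

theorem sum_smul_vecMulVec_mul_sum_smul_vecMulVec [DecidableEq ι] {u : ι → n → ℂ}
    (hu : ∀ i j, star (u i) ⬝ᵥ u j = if i = j then 1 else 0) (c d : ι → ℂ) :
    (∑ i, c i • vecMulVec (u i) (star (u i))) * (∑ i, d i • vecMulVec (u i) (star (u i))) =
      ∑ i, (c i * d i) • vecMulVec (u i) (star (u i)) := by
  rw [sum_mul]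
  refine sum_congr rfl fun i _ => ?_
  rw [mul_sum, sum_eq_single i (fun j _ hji => by
    simp [vecMulVec_mul_vecMulVec, hu, hji.symm]) (by simp)]
  simp [vecMulVec_mul_vecMulVec, hu, smul_smul, mul_comm]

theorem posSemidef_sum_smul_vecMulVec {c : ι → ℝ} (hc : 0 ≤ c) (u : ι → n → ℂ) :
    (∑ i, (c i : ℂ) • vecMulVec (u i) (star (u i))).PosSemidef :=
  posSemidef_sum _ fun i _ =>
    (posSemidef_vecMulVec_self_star (u i)).smul (Complex.zero_le_real.2 (hc i))

theorem trace_mul_sum_smul_vecMulVec_mul_sum_smul_vecMulVec {κ : Type*} [Fintype κ]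
    (W : Matrix n n ℂ) (u : ι → n → ℂ) (w : κ → n → ℂ) (c : ι → ℂ) (d : κ → ℂ) :
    (W * ((∑ x, c x • vecMulVec (u x) (star (u x))) *
        ∑ y, d y • vecMulVec (w y) (star (w y)))).trace
      = ∑ x, ∑ y, c x * d y * ((star (u x) ⬝ᵥ w y) * (star (w y) ⬝ᵥ W *ᵥ u x)) := by
  have hterm : ∀ a b : n → ℂ, (W * vecMulVec a (star a) * vecMulVec b (star b)).trace
      = (star a ⬝ᵥ b) * (star b ⬝ᵥ W *ᵥ a) := fun a b => by
    rw [Matrix.mul_assoc, vecMulVec_mul_vecMulVec, mul_vecMulVec, trace_vecMulVec,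
      dotProduct_smul, smul_eq_mul, dotProduct_comm (W *ᵥ a)]
  rw [← Matrix.mul_assoc]
  simp only [mul_sum, sum_mul, trace_sum, smul_mul_assoc, mul_smul_comm, trace_smul, hterm,
    smul_eq_mul]
  rw [sum_comm]
  exact sum_congr rfl fun x _ => sum_congr rfl fun y _ => by ring

variable [DecidableEq n]

namespace IsHermitian

variable {𝕜 : Type*} [RCLike 𝕜] {A : Matrix n n 𝕜} (hA : A.IsHermitian)
include hA

theorem cfc_id_eq : hA.cfc id = A :=
  hA.spectral_theorem.symm

theorem cfc_mul (f g : ℝ → ℝ) : hA.cfc (f * g) = hA.cfc f * hA.cfc g := by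
  simp only [IsHermitian.cfc, ← map_mul, diagonal_mul_diagonal]
  congr 2
  ext i
  simp

theorem cfc_congr {f g : ℝ → ℝ} (hfg : ∀ i, f (hA.eigenvalues i) = g (hA.eigenvalues i)) :
    hA.cfc f = hA.cfc g := by
  simp only [IsHermitian.cfc, Function.comp_def, hfg]

theorem conjTranspose_cfc (f : ℝ → ℝ) : (hA.cfc f)ᴴ = hA.cfc f := by
  rw [← star_eq_conjTranspose, IsHermitian.cfc, ← map_star, star_eq_conjTranspose,
    diagonal_conjTranspose]
  congr 2
  ext i
  simp

open scoped Matrix.Norms.L2Operator in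
theorem l2_opNorm_cfc_le {f : ℝ → ℝ} {c : ℝ} (hc : 0 ≤ c)
    (hf : ∀ i, |f (hA.eigenvalues i)| ≤ c) : ‖hA.cfc f‖ ≤ c := by
  rw [IsHermitian.cfc, Unitary.conjStarAlgAut_apply,
    CStarRing.norm_mul_mem_unitary _ (Unitary.star_mem hA.eigenvectorUnitary.2),
    CStarRing.norm_coe_unitary_mul, l2_opNorm_diagonal]
  exact (pi_norm_le_iff_of_nonneg hc).2 fun i => by simpa using hf i

end IsHermitian

theorem PosSemidef.sqrt_eq_cfc {𝕜 : Type*} [RCLike 𝕜] {A : Matrix n n 𝕜} (hA : A.PosSemidef) :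
    hA.sqrt = hA.1.cfc Real.sqrt := by
  simp [PosSemidef.sqrt, IsHermitian.cfc, Unitary.conjStarAlgAut_apply]

open scoped MatrixOrder in
theorem PosSemidef.sqrt_eq_of_mul_self_eq {𝕜 : Type*} [RCLike 𝕜] {A B : Matrix n n 𝕜} (hA : A.PosSemidef)
    (hB : B.PosSemidef) (h : B * B = A) : hA.sqrt = B := by
  rw [hA.sqrt_eq_cfc, ← hA.1.cfc_eq, ← cfcₙ_eq_cfc, ← CFC.sqrt_eq_real_sqrt A hA.nonneg]
  exact CFC.sqrt_unique h hB.nonneg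

theorem PosSemidef.sqrt_eq_sum_smul_vecMulVec [DecidableEq ι] {A : Matrix n n ℂ}
    (hA : A.PosSemidef) {u : ι → n → ℂ} (hu : ∀ i j, star (u i) ⬝ᵥ u j = if i = j then 1 else 0)
    {c : ι → ℝ} (hc : 0 ≤ c) (hAc : A = ∑ i, (c i : ℂ) • vecMulVec (u i) (star (u i))) :
    hA.sqrt = ∑ i, (√(c i) : ℂ) • vecMulVec (u i) (star (u i)) := by
  refine hA.sqrt_eq_of_mul_self_eq
    (posSemidef_sum_smul_vecMulVec (fun _ => Real.sqrt_nonneg _) u) ?_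
  rw [sum_smul_vecMulVec_mul_sum_smul_vecMulVec hu, hAc]
  refine sum_congr rfl fun i _ => ?_
  rw [← Complex.ofReal_mul, Real.mul_self_sqrt (hc i)]

theorem PosSemidef.sqrt_eq_sum_smul_vecMulVec_kroneckerVec {κ ι m : Type*} [Fintype κ]
    [DecidableEq κ] [Fintype ι] [DecidableEq ι] [Fintype m] [DecidableEq m]
    {g : κ → ι → m → ℂ} {f : κ → n → ℂ}
    (hg : ∀ k i j, star (g k i) ⬝ᵥ g k j = if i = j then 1 else 0)
    (hf : ∀ k l, star (f k) ⬝ᵥ f l = if k = l then 1 else 0) {r : κ → ι → ℝ} (hr : 0 ≤ r)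
    {A : Matrix (m × n) (m × n) ℂ} (hA : A.PosSemidef)
    (hAr : A = ∑ k, ∑ i, (r k i : ℂ) •
      (vecMulVec (g k i) (star (g k i)) ⊗ₖ vecMulVec (f k) (star (f k)))) :
    hA.sqrt = ∑ x : κ × ι, (√(r x.1 x.2) : ℂ) •
      vecMulVec (kroneckerVec (g x.1 x.2) (f x.1)) (star (kroneckerVec (g x.1 x.2) (f x.1))) := by
  refine hA.sqrt_eq_sum_smul_vecMulVec (star_kroneckerVec_dotProduct_kroneckerVec_eq_ite hg hf)
    (fun x => hr x.1 x.2) ?_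
  simp only [hAr, Fintype.sum_prod_type, vecMulVec_kronecker_vecMulVec]

open scoped Matrix.Norms.L2Operator in
theorem exists_l2_opNorm_le_one_mul_eq_sqrt (M : Matrix n n ℂ) :
    ∃ W : Matrix n n ℂ, ‖W‖ ≤ 1 ∧ W * M = (posSemidef_conjTranspose_mul_self M).sqrt := by
  set hN := posSemidef_conjTranspose_mul_self M
  set P := hN.1.cfc fun x => (√x)⁻¹
  have hMM : Mᴴ * M = hN.1.cfc id := hN.1.cfc_id_eq.symm
  -- the polar part `(MᴴM)^{-1/2} Mᴴ` of `M`, with `0⁻¹ = 0` on the kernel of `M`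
  refine ⟨P * Mᴴ, ?_, ?_⟩
  · have hWW : P * Mᴴ * star (P * Mᴴ) = hN.1.cfc ((fun x => (√x)⁻¹) * id * fun x => (√x)⁻¹) := by
      rw [star_eq_conjTranspose, conjTranspose_mul, conjTranspose_conjTranspose,
        hN.1.conjTranspose_cfc, hN.1.cfc_mul, hN.1.cfc_mul, ← hMM]
      simp only [P, Matrix.mul_assoc]
    have hsq : ‖P * Mᴴ‖ * ‖P * Mᴴ‖ ≤ 1 := by
      rw [← CStarRing.norm_self_mul_star, hWW]
      refine hN.1.l2_opNorm_cfc_le zero_le_one fun i => ?_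
      set x := hN.1.eigenvalues i
      rcases le_or_gt x 0 with hx | hx
      · simp [Real.sqrt_eq_zero'.2 hx]
      · have hx' : (√x)⁻¹ * x * (√x)⁻¹ = 1 := by
          field_simp
          exact (Real.sq_sqrt hx.le).symm
        simp [hx']
    nlinarith [norm_nonneg (P * Mᴴ)]
  · calc P * Mᴴ * M = hN.1.cfc ((fun x => (√x)⁻¹) * id) := by
          rw [Matrix.mul_assoc, hN.1.cfc_mul]
          exact congrArg (P * ·) hMM
      _ = hN.sqrt := by
          rw [hN.sqrt_eq_cfc]
          refine hN.1.cfc_congr fun i => ?_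
          simp [inv_mul_eq_div, Real.div_sqrt]

end Matrix

open scoped Matrix.Norms.L2Operator in
theorem traceNorm_mul_le_sum_mul_of_blockOrthogonal {κ n : Type*} [Fintype κ] [DecidableEq κ]
    [Fintype n] [DecidableEq n] {m : ℕ} {u w : κ × Fin m → n → ℂ}
    (hu : ∀ x y, star (u x) ⬝ᵥ u y = if x = y then 1 else 0)
    (hw : ∀ x y, star (w x) ⬝ᵥ w y = if x = y then 1 else 0)
    (huw : ∀ k l i j, k ≠ l → star (u (k, i)) ⬝ᵥ w (l, j) = 0)
    {c d : κ → Fin m → ℝ} (hc₀ : 0 ≤ c) (hd₀ : 0 ≤ d)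
    (hc : ∀ k, Antitone (c k)) (hd : ∀ k, Antitone (d k)) :
    traceNorm ((∑ x, (c x.1 x.2 : ℂ) • vecMulVec (u x) (star (u x))) *
        ∑ y, (d y.1 y.2 : ℂ) • vecMulVec (w y) (star (w y))) ≤ ∑ k, ∑ i, c k i * d k i := by
  obtain ⟨W, hW, hWM⟩ := exists_l2_opNorm_le_one_mul_eq_sqrt
    ((∑ x, (c x.1 x.2 : ℂ) • vecMulVec (u x) (star (u x))) *
        ∑ y, (d y.1 y.2 : ℂ) • vecMulVec (w y) (star (w y)))
  set U : κ × Fin m → EuclideanSpace ℂ n := fun x => WithLp.toLp 2 (u x)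
  set V : κ × Fin m → EuclideanSpace ℂ n := fun y => WithLp.toLp 2 (w y)
  set T := toEuclideanCLM (n := n) (𝕜 := ℂ) W
  have hU : Orthonormal ℂ U := EuclideanSpace.orthonormal_toLp_iff.2 hu
  have hV : Orthonormal ℂ V := EuclideanSpace.orthonormal_toLp_iff.2 hw
  have hUV : (of fun x y => ‖⟪U x, V y⟫_ℂ‖ ^ 2).IsDoublySubstochastic := by
    convert hU.isDoublySubstochastic_norm_inner_sq hV ContinuousLinearMap.norm_id_le using 4
    rw [norm_inner_symm, ContinuousLinearMap.id_apply]
  have hVTU : (of fun x y => ‖⟪V y, T (U x)⟫_ℂ‖ ^ 2).IsDoublySubstochastic :=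
    hU.isDoublySubstochastic_norm_inner_sq hV hW
  have hdot : ∀ a b : n → ℂ, star a ⬝ᵥ b = ⟪WithLp.toLp 2 a, WithLp.toLp 2 b⟫_ℂ := fun a b => by
    rw [EuclideanSpace.inner_toLp_toLp, dotProduct_comm]
  calc traceNorm _ = (W * _).trace.re := by rw [hWM]; rfl
    _ = (∑ x, ∑ y, (c x.1 x.2 : ℂ) * d y.1 y.2 * (⟪U x, V y⟫_ℂ * ⟪V y, T (U x)⟫_ℂ)).re := by
        rw [trace_mul_sum_smul_vecMulVec_mul_sum_smul_vecMulVec]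
        simp only [hdot, U, V, T, toEuclideanCLM_toLp]
    _ ≤ ∑ x, ∑ y, c x.1 x.2 * d y.1 y.2 * (‖⟪U x, V y⟫_ℂ‖ * ‖⟪V y, T (U x)⟫_ℂ‖) := by
        simp only [Complex.re_sum]
        refine sum_le_sum fun x _ => sum_le_sum fun y _ => (Complex.re_le_norm _).trans_eq ?_
        rw [norm_mul, norm_mul, norm_mul, Complex.norm_of_nonneg (hc₀ _ _),
          Complex.norm_of_nonneg (hd₀ _ _)]
    _ = ∑ k, ∑ i, ∑ j, c k i * d k j * (‖⟪U (k, i), V (k, j)⟫_ℂ‖ * ‖⟪V (k, j), T (U (k, i))⟫_ℂ‖) :=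
        Fintype.sum_sum_prod_eq_sum_sum_sum_of_ne _ fun k l i j hkl => by
          simp [U, V, ← hdot, huw k l i j hkl]
    _ ≤ ∑ k, ∑ i, c k i * d k i := sum_le_sum fun k _ =>
        sum_sum_mul_norm_mul_norm_le (hc₀ k) (hd₀ k) (hc k) (hd k)
          (hUV.submatrix (Prod.mk_right_injective k) (Prod.mk_right_injective k))
          (hVTU.submatrix (Prod.mk_right_injective k) (Prod.mk_right_injective k))

theorem qc_fidelity_le_sorted_eigenvalue_sum_general {dA dB : ℕ}
    (α β : Fin dB → ℝ) (p q : Fin dB → Fin dA → ℝ)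
    (hα : ∀ k, 0 ≤ α k) (hβ : ∀ k, 0 ≤ β k)
    (hp : ∀ k j, 0 ≤ p k j) (hq : ∀ k j, 0 ≤ q k j)
    (hpsort : ∀ k, ∀ i j : Fin dA, i ≤ j → p k j ≤ p k i)
    (hqsort : ∀ k, ∀ i j : Fin dA, i ≤ j → q k j ≤ q k i)
    (e et : Fin dB → Fin dA → (Fin dA → ℂ)) (f : Fin dB → (Fin dB → ℂ))
    (he : ∀ k i j, star (e k i) ⬝ᵥ e k j = if i = j then 1 else 0)
    (het : ∀ k i j, star (et k i) ⬝ᵥ et k j = if i = j then 1 else 0)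
    (hf : ∀ k l, star (f k) ⬝ᵥ f l = if k = l then 1 else 0)
    (ρ σ : Matrix (Fin dA × Fin dB) (Fin dA × Fin dB) ℂ)
    (hρ : ρ.PosSemidef) (hσ : σ.PosSemidef)
    (hρdef : ρ = ∑ k, ∑ j, ((p k j * α k : ℝ) : ℂ) •
        (vecMulVec (e k j) (star (e k j)) ⊗ₖ vecMulVec (f k) (star (f k))))
    (hσdef : σ = ∑ k, ∑ j, ((q k j * β k : ℝ) : ℂ) •
        (vecMulVec (et k j) (star (et k j)) ⊗ₖ vecMulVec (f k) (star (f k)))) :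
    traceNorm (hρ.sqrt * hσ.sqrt) ≤
      ∑ k, ∑ j, Real.sqrt (p k j * α k) * Real.sqrt (q k j * β k) := by
  rw [hρ.sqrt_eq_sum_smul_vecMulVec_kroneckerVec he hf
      (fun k j => mul_nonneg (hp k j) (hα k)) hρdef,
    hσ.sqrt_eq_sum_smul_vecMulVec_kroneckerVec het hf
      (fun k j => mul_nonneg (hq k j) (hβ k)) hσdef]
  exact traceNorm_mul_le_sum_mul_of_blockOrthogonal (c := fun k j => √(p k j * α k))
    (d := fun k j => √(q k j * β k))
    (star_kroneckerVec_dotProduct_kroneckerVec_eq_ite he hf)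
    (star_kroneckerVec_dotProduct_kroneckerVec_eq_ite het hf)
    (fun k l i j hkl => by rw [star_kroneckerVec_dotProduct_kroneckerVec, hf, if_neg hkl, mul_zero])
    (fun _ _ => Real.sqrt_nonneg _) (fun _ _ => Real.sqrt_nonneg _)
    (fun k i j hij => Real.sqrt_le_sqrt (mul_le_mul_of_nonneg_right (hpsort k i j hij) (hα k)))
    (fun k i j hij => Real.sqrt_le_sqrt (mul_le_mul_of_nonneg_right (hqsort k i j hij) (hβ k)))

/-- For quantum-classical states `ρ = ∑_{k,j} p_{jk} α_k |e_{jk}⟩⟨e_{jk}| ⊗ |f_k⟩⟨f_k|`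
and `σ = ∑_{k,j} q_{jk} β_k |ẽ_{jk}⟩⟨ẽ_{jk}| ⊗ |f_k⟩⟨f_k|`, with the eigenvalues
sorted in nonincreasing order in `j` for each `k`, the fidelity satisfies
`F(ρ,σ) = ‖√ρ √σ‖₁ ≤ ∑_{k,j} √(p_{jk} α_k) √(q_{jk} β_k)`. -/
theorem qc_fidelity_le_sorted_eigenvalue_sum {dA dB : ℕ}
    (α β : Fin dB → ℝ) (p q : Fin dB → Fin dA → ℝ)
    (hα : ∀ k, 0 ≤ α k) (hβ : ∀ k, 0 ≤ β k)
    (hαsum : ∑ k, α k = 1) (hβsum : ∑ k, β k = 1)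
    (hp : ∀ k j, 0 ≤ p k j) (hq : ∀ k j, 0 ≤ q k j)
    (hpsum : ∀ k, ∑ j, p k j = 1) (hqsum : ∀ k, ∑ j, q k j = 1)
    (hpsort : ∀ k, ∀ i j : Fin dA, i ≤ j → p k j ≤ p k i)
    (hqsort : ∀ k, ∀ i j : Fin dA, i ≤ j → q k j ≤ q k i)
    (e et : Fin dB → Fin dA → (Fin dA → ℂ)) (f : Fin dB → (Fin dB → ℂ))
    (he : ∀ k i j, star (e k i) ⬝ᵥ e k j = if i = j then 1 else 0)
    (het : ∀ k i j, star (et k i) ⬝ᵥ et k j = if i = j then 1 else 0)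
    (hf : ∀ k l, star (f k) ⬝ᵥ f l = if k = l then 1 else 0)
    (ρ σ : Matrix (Fin dA × Fin dB) (Fin dA × Fin dB) ℂ)
    (hρ : ρ.PosSemidef) (hσ : σ.PosSemidef)
    (hρdef : ρ = ∑ k, ∑ j, ((p k j * α k : ℝ) : ℂ) •
        (vecMulVec (e k j) (star (e k j)) ⊗ₖ vecMulVec (f k) (star (f k))))
    (hσdef : σ = ∑ k, ∑ j, ((q k j * β k : ℝ) : ℂ) •
        (vecMulVec (et k j) (star (et k j)) ⊗ₖ vecMulVec (f k) (star (f k)))) :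
    traceNorm (hρ.sqrt * hσ.sqrt) ≤
      ∑ k, ∑ j, Real.sqrt (p k j * α k) * Real.sqrt (q k j * β k) :=
  qc_fidelity_le_sorted_eigenvalue_sum_general α β p q hα hβ hp hq hpsort hqsort e et f he het hf ρ
    σ hρ hσ hρdef hσdef
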